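/- Let Y be a manifold, and let λ₀, λ₁ be two 1-forms on a 3-manifold Y such that at each point z there is a tangent vector R(z) with λ₀(R) = λ₁(R) = 1, R ⌟ dλ₀ = R ⌟ dλ₁ = 0, and such that λ₀ ∧ dλ₀ and λ₁ ∧ dλ₁ are both positive volume forms with respect to a fixed orientation. Then for every t ∈ [0,1], the convex combination λ_t = t λ₁ + (1−t) λ₀ satisfies that λ_t ∧ dλ_t is a positive volume form; in particular λ_t is a contact form. -/

import Mathlib

/-- The wedge product `l ∧ ω` of a 1-form `l` and a 2-form `ω` on a vector space,
evaluated on a triple of vectors. -/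
noncomputable def wedge13 {V : Type*} [AddCommGroup V] [Module ℝ V]
    (l : V →ₗ[ℝ] ℝ) (ω : V [⋀^Fin 2]→ₗ[ℝ] ℝ) (u v w : V) : ℝ :=
  l u * ω ![v, w] - l v * ω ![u, w] + l w * ω ![u, v]

section aux
variable {V : Type*} [AddCommGroup V] [Module ℝ V]

lemma alt_swap (ω : V [⋀^Fin 2]→ₗ[ℝ] ℝ) (u v : V) : ω ![u, v] = -ω ![v, u] := by
  have h := ω.map_swap ![v, u] (show (0 : Fin 2) ≠ 1 by decide)
  have : (![v, u] ∘ Equiv.swap (0 : Fin 2) 1) = ![u, v] := by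
    funext i; fin_cases i <;> simp [Equiv.swap_apply_of_ne_of_ne]
  rw [this] at h
  rw [h]

lemma alt_diag (ω : V [⋀^Fin 2]→ₗ[ℝ] ℝ) (u : V) : ω ![u, u] = 0 := by
  have := alt_swap ω u u
  linarith

lemma alt_left (ω : V [⋀^Fin 2]→ₗ[ℝ] ℝ) (a b c : ℝ) (x y z v : V) :
    ω ![a • x + b • y + c • z, v]
      = a * ω ![x, v] + b * ω ![y, v] + c * ω ![z, v] := by
  have hu : ∀ u : V, (![u, v] : Fin 2 → V) = Function.update ![x, v] 0 u := by
    intro u; funext i; fin_cases i <;> simp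
  rw [hu (a • x + b • y + c • z), hu x, hu y, hu z,
    ω.map_update_add, ω.map_update_add, ω.map_update_smul, ω.map_update_smul,
    ω.map_update_smul]
  simp only [Function.update_idem, smul_eq_mul]

/-- key vanishing: if `m R = 0` and `ι_R ω = 0` then `m ∧ ω = 0`. -/
lemma wedge_vanish (e : Module.Basis (Fin 3) ℝ V)
    (m : V →ₗ[ℝ] ℝ) (ω : V [⋀^Fin 2]→ₗ[ℝ] ℝ) (R : V) (hR : R ≠ 0)
    (hm : m R = 0) (hω : ∀ v, ω ![R, v] = 0) :
    wedge13 m ω (e 0) (e 1) (e 2) = 0 := by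
  set r : Fin 3 → ℝ := fun i => e.repr R i with hr
  have hRe : R = r 0 • e 0 + r 1 • e 1 + r 2 • e 2 := by
    have h := e.sum_repr R
    rw [Fin.sum_univ_three] at h
    exact h.symm
  -- not all coordinates vanish
  have hex : r 0 ≠ 0 ∨ r 1 ≠ 0 ∨ r 2 ≠ 0 := by
    by_contra h
    push_neg at h
    apply hR
    rw [hRe, h.1, h.2.1, h.2.2]
    simp
  set w01 := ω ![e 0, e 1] with hw01
  set w02 := ω ![e 0, e 2] with hw02
  set w12 := ω ![e 1, e 2] with hw12
  have E : ∀ j, r 0 * ω ![e 0, e j] + r 1 * ω ![e 1, e j] + r 2 * ω ![e 2, e j] = 0 := by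
    intro j
    have h := hω (e j)
    rw [hRe, alt_left] at h
    exact h
  have E0 : r 1 * w01 + r 2 * w02 = 0 := by
    have h := E 0
    rw [alt_diag, alt_swap ω (e 1) (e 0), alt_swap ω (e 2) (e 0)] at h
    rw [hw01, hw02]; linarith
  have E1 : r 0 * w01 - r 2 * w12 = 0 := by
    have h := E 1
    rw [alt_diag, alt_swap ω (e 2) (e 1)] at h
    rw [hw01, hw12]; linarith
  have E2 : r 0 * w02 + r 1 * w12 = 0 := by
    have h := E 2
    rw [alt_diag] at h
    rw [hw02, hw12]; linarith
  have hmE : r 0 * m (e 0) + r 1 * m (e 1) + r 2 * m (e 2) = 0 := by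
    rw [hRe] at hm
    simpa [mul_comm] using hm
  show m (e 0) * w12 - m (e 1) * w02 + m (e 2) * w01 = 0
  rcases hex with h | h | h
  · have key : r 0 * (m (e 0) * w12 - m (e 1) * w02 + m (e 2) * w01) = 0 := by
      linear_combination w12 * hmE - m (e 1) * E2 + m (e 2) * E1
    exact (mul_eq_zero.mp key).resolve_left h
  · have key : r 1 * (m (e 0) * w12 - m (e 1) * w02 + m (e 2) * w01) = 0 := by
      linear_combination (-w02) * hmE + m (e 0) * E2 + m (e 2) * E0
    exact (mul_eq_zero.mp key).resolve_left h
  · have key : r 2 * (m (e 0) * w12 - m (e 1) * w02 + m (e 2) * w01) = 0 := by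
      linear_combination w01 * hmE - m (e 0) * E1 - m (e 1) * E0
    exact (mul_eq_zero.mp key).resolve_left h

end aux

/-- Pointwise (linear-algebra) version of the Moser-trick convexity lemma: if `λ₀, λ₁` are
1-forms on an oriented 3-dimensional space with the same Reeb vector `R` (`λᵢ(R) = 1`,
`R ⌟ dλᵢ = 0`) and both `λᵢ ∧ dλᵢ` are positive with respect to the orientation (given by the
ordered basis `e`), then `λ_t ∧ dλ_t` is positive for every `t ∈ [0,1]`; in particular the
convex combination `λ_t = t λ₁ + (1-t) λ₀` is a contact form. -/
theorem stmt_4 {V : Type*} [AddCommGroup V] [Module ℝ V]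
    (e : Module.Basis (Fin 3) ℝ V)
    (l₀ l₁ : V →ₗ[ℝ] ℝ) (ω₀ ω₁ : V [⋀^Fin 2]→ₗ[ℝ] ℝ) (R : V)
    (hl₀ : l₀ R = 1) (hl₁ : l₁ R = 1)
    (hω₀ : ∀ v, ω₀ ![R, v] = 0) (hω₁ : ∀ v, ω₁ ![R, v] = 0)
    (h₀ : 0 < wedge13 l₀ ω₀ (e 0) (e 1) (e 2))
    (h₁ : 0 < wedge13 l₁ ω₁ (e 0) (e 1) (e 2)) :
    ∀ t ∈ Set.Icc (0 : ℝ) 1,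
      0 < wedge13 (t • l₁ + (1 - t) • l₀) (t • ω₁ + (1 - t) • ω₀) (e 0) (e 1) (e 2) := by
  intro t ht
  obtain ⟨ht0, ht1⟩ := ht
  have hR : R ≠ 0 := by
    intro h
    rw [h] at hl₀
    simp at hl₀
  have key : ∀ ω : V [⋀^Fin 2]→ₗ[ℝ] ℝ, (∀ v, ω ![R, v] = 0) →
      wedge13 l₁ ω (e 0) (e 1) (e 2) = wedge13 l₀ ω (e 0) (e 1) (e 2) := by
    intro ω hω
    have h := wedge_vanish e (l₁ - l₀) ω R hR (by simp [hl₀, hl₁]) hω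
    simp only [wedge13, LinearMap.sub_apply] at h ⊢
    linarith
  have k0 := key ω₀ hω₀
  have k1 := key ω₁ hω₁
  have expand : wedge13 (t • l₁ + (1 - t) • l₀) (t • ω₁ + (1 - t) • ω₀) (e 0) (e 1) (e 2)
      = t * wedge13 l₁ ω₁ (e 0) (e 1) (e 2) + (1 - t) * wedge13 l₀ ω₀ (e 0) (e 1) (e 2) := by
    simp only [wedge13, LinearMap.add_apply, LinearMap.smul_apply,
      AlternatingMap.add_apply, AlternatingMap.smul_apply, smul_eq_mul] at k0 k1 ⊢
    linear_combination (t * (1 - t)) * k0 - (t * (1 - t)) * k1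
  rw [expand]
  rcases lt_or_eq_of_le ht0 with h | h
  · have := mul_pos h h₁
    have h2 : 0 ≤ (1 - t) * wedge13 l₀ ω₀ (e 0) (e 1) (e 2) :=
      mul_nonneg (by linarith) h₀.le
    linarith
  · rw [← h]
    simpa using h₀
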